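/- arXiv:2207.01051 — 3 statements merged into one kernel-verified Lean document; each statement's English description precedes it below -/
import Mathlib

section
/- Let k ≥ 2, let D be a k-dicritical oriented graph, and let K(D) be the D-knob with base z₁z₂. Then χ⃗(K(D)) = k, and in every k-dicolouring of K(D) the vertices z₁ and z₂ receive different colours. -/
/-!
Basic theory of finite digraphs: a digraph has a finite vertex set and a
finite set of arcs (ordered pairs of distinct vertices).
-/

/-- A finite digraph on a vertex type `V`: a finite vertex set together with a
finite set of arcs, each arc being an ordered pair of distinct vertices. -/
structure Digraph' (V : Type*) where
  verts : Finset V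
  arcs : Finset (V × V)
  wf : ∀ a ∈ arcs, a.1 ∈ verts ∧ a.2 ∈ verts ∧ a.1 ≠ a.2

namespace Digraph'

variable {V : Type*} [DecidableEq V]

/-- The number of vertices of a digraph. -/
def n (D : Digraph' V) : ℕ := D.verts.card

/-- The number of arcs of a digraph. -/
def m (D : Digraph' V) : ℕ := D.arcs.card

/-- The set of consecutive (cyclically) pairs of a list, i.e. the arcs of the
directed cycle running through the list. -/
def cyclicArcs (c : List V) : Finset (V × V) := (c.zip (c.rotate 1)).toFinset

/-- The set of consecutive pairs of a list, i.e. the arcs of the directed path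
running through the list. -/
def pathArcs (p : List V) : Finset (V × V) := (p.zip p.tail).toFinset

/-- The symmetric closure of a set of arcs. -/
def symArcs (s : Finset (V × V)) : Finset (V × V) := s ∪ s.image Prod.swap

/-- The arcs of the bidirected path running through a list (each consecutive
pair is joined by a digon). -/
def pathDigonArcs (p : List V) : Finset (V × V) := symArcs (pathArcs p)

/-- `p` is the list of vertices of a path of odd length (an odd number of edges,
equivalently an even number of vertices) from `a` to `b`. -/
def IsOddBidirPathList (p : List V) (a b : V) : Prop :=
  p.Nodup ∧ Even p.length ∧ p.head? = some a ∧ p.getLast? = some b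

/-- The subdigraph induced by `S` contains no directed cycle.  A directed cycle
is given by a nonempty list of at least two distinct vertices, each one having an
arc towards the (cyclically) next one. -/
def AcyclicOn (D : Digraph' V) (S : Finset V) : Prop :=
  ¬ ∃ c : List V, c.Nodup ∧ 2 ≤ c.length ∧ (∀ v ∈ c, v ∈ S) ∧ cyclicArcs c ⊆ D.arcs

/-- `φ` is a `k`-dicolouring of `D`: every colour class induces an acyclic
subdigraph. -/
def IsDicolouring (D : Digraph' V) (k : ℕ) (φ : V → Fin k) : Prop :=
  ∀ i : Fin k, D.AcyclicOn (D.verts.filter fun v => φ v = i)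

/-- `D` admits a `k`-dicolouring. -/
def Dicolourable (D : Digraph' V) (k : ℕ) : Prop :=
  ∃ φ : V → Fin k, D.IsDicolouring k φ

/-- The dichromatic number of `D`: the least `k` such that `D` is
`k`-dicolourable. -/
noncomputable def dichromatic (D : Digraph' V) : ℕ := sInf {k | D.Dicolourable k}

/-- `H` is a subdigraph of `D`. -/
def IsSubdigraph (H D : Digraph' V) : Prop := H.verts ⊆ D.verts ∧ H.arcs ⊆ D.arcs

/-- `H` is a proper subdigraph of `D`. -/
def IsProperSubdigraph (H D : Digraph' V) : Prop :=
  H.IsSubdigraph D ∧ (H.verts ≠ D.verts ∨ H.arcs ≠ D.arcs)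

/-- `D` is `k`-dicritical: its dichromatic number is `k` and every proper
subdigraph has dichromatic number at most `k - 1`. -/
def Dicritical (k : ℕ) (D : Digraph' V) : Prop :=
  D.dichromatic = k ∧
    ∀ H : Digraph' V, H.IsProperSubdigraph D → H.dichromatic ≤ k - 1

/-- `D` is an oriented graph: it has no digon. -/
def Oriented (D : Digraph' V) : Prop := ∀ a ∈ D.arcs, (a.2, a.1) ∉ D.arcs

/-- There is a digon between `u` and `v` in `D`. -/
def HasDigon (D : Digraph' V) (u v : V) : Prop :=
  (u, v) ∈ D.arcs ∧ (v, u) ∈ D.arcs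

/-- `u` and `v` are neighbours: there is at least one arc between them. -/
def UAdj (D : Digraph' V) (u v : V) : Prop :=
  (u, v) ∈ D.arcs ∨ (v, u) ∈ D.arcs

/-- `M` is a matching of digons of `D` (a matching of the digon graph `B(D)`):
a set of digons of `D`, pairwise sharing no end-vertex. -/
def IsDigonMatching (D : Digraph' V) (M : Finset (V × V)) : Prop :=
  (∀ p ∈ M, D.HasDigon p.1 p.2) ∧
    ∀ p ∈ M, ∀ q ∈ M, p ≠ q → p.1 ≠ q.1 ∧ p.1 ≠ q.2 ∧ p.2 ≠ q.1 ∧ p.2 ≠ q.2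

/-- `π(D)`: the maximum size of a matching of the digon graph `B(D)`. -/
noncomputable def piNum (D : Digraph' V) : ℕ :=
  sSup {k | ∃ M : Finset (V × V), D.IsDigonMatching M ∧ M.card = k}

/-- The potential `ρ(D) = 7 n(D) - 3 m(D) - 2 π(D)`. -/
noncomputable def potential (D : Digraph' V) : ℤ :=
  7 * (D.n : ℤ) - 3 * (D.m : ℤ) - 2 * (D.piNum : ℤ)

/-- The subdigraph of `D` induced by `R`. -/
def induce (D : Digraph' V) (R : Finset V) : Digraph' V where
  verts := D.verts ∩ R
  arcs := D.arcs.filter fun a => a.1 ∈ R ∧ a.2 ∈ R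
  wf := by
    intro a ha
    rw [Finset.mem_filter] at ha
    obtain ⟨h, h1, h2⟩ := ha
    obtain ⟨hv1, hv2, hne⟩ := D.wf a h
    exact ⟨Finset.mem_inter.mpr ⟨hv1, h1⟩, Finset.mem_inter.mpr ⟨hv2, h2⟩, hne⟩

/-- The potential `ρ_D(R)` of a set of vertices `R` in `D`: the potential of the
subdigraph of `D` induced by `R`. -/
noncomputable def potentialOn (D : Digraph' V) (R : Finset V) : ℤ :=
  (D.induce R).potential

/-- The digraph obtained from `D` by deleting the arc `a`. -/
def eraseArc (D : Digraph' V) (a : V × V) : Digraph' V where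
  verts := D.verts
  arcs := D.arcs.erase a
  wf := fun b hb => D.wf b (Finset.mem_of_mem_erase hb)

/-- The digraph obtained from `D` by deleting the vertex `v`. -/
def delVert (D : Digraph' V) (v : V) : Digraph' V where
  verts := D.verts.erase v
  arcs := D.arcs.filter fun a => a.1 ≠ v ∧ a.2 ≠ v
  wf := by
    intro a ha
    rw [Finset.mem_filter] at ha
    obtain ⟨h, h1, h2⟩ := ha
    obtain ⟨hv1, hv2, hne⟩ := D.wf a h
    exact ⟨Finset.mem_erase.mpr ⟨h1, hv1⟩, Finset.mem_erase.mpr ⟨h2, hv2⟩, hne⟩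

/-- The degree of `v` in `D`: the number of arcs incident to `v`. -/
def degree (D : Digraph' V) (v : V) : ℕ :=
  (D.arcs.filter fun a => a.1 = v ∨ a.2 = v).card

/-- `D` is a bidirected odd cycle: obtained from an undirected cycle of odd
length (at least 3) by replacing every edge by a digon. -/
def IsBidirectedOddCycle (D : Digraph' V) : Prop :=
  ∃ c : List V, c.Nodup ∧ 3 ≤ c.length ∧ Odd c.length ∧
    D.verts = c.toFinset ∧ D.arcs = symArcs (cyclicArcs c)

/-- `H` is a bidirected odd cycle with one arc removed. -/
def IsBidirOddCycleMinusArc (H : Digraph' V) : Prop :=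
  ∃ (C : Digraph' V) (e : V × V), C.IsBidirectedOddCycle ∧ e ∈ C.arcs ∧
    H.verts = C.verts ∧ H.arcs = C.arcs.erase e

/-- `D` is an odd 3-wheel with center `c`: a vertex `c` joined to a directed
3-cycle `(x, y, z, x)` by three bidirected paths of odd length, pairwise
disjoint except in `c`. -/
def IsOdd3WheelWithCenter (D : Digraph' V) (c : V) : Prop :=
  ∃ (p₁ p₂ p₃ : List V) (x y z : V),
    IsOddBidirPathList p₁ c x ∧ IsOddBidirPathList p₂ c y ∧ IsOddBidirPathList p₃ c z ∧
    p₁.toFinset ∩ p₂.toFinset = {c} ∧ p₁.toFinset ∩ p₃.toFinset = {c} ∧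
    p₂.toFinset ∩ p₃.toFinset = {c} ∧
    D.verts = p₁.toFinset ∪ p₂.toFinset ∪ p₃.toFinset ∧
    D.arcs = pathDigonArcs p₁ ∪ pathDigonArcs p₂ ∪ pathDigonArcs p₃ ∪
      {(x, y), (y, z), (z, x)}

/-- `D` is an odd 3-wheel. -/
def IsOdd3Wheel (D : Digraph' V) : Prop := ∃ c : V, D.IsOdd3WheelWithCenter c

end Digraph'

/-- `K` is the `D`-knob with base `z₁z₂`: `z₁, z₂` are two new vertices, and `K`
is obtained from `D` by adding the arc `z₁z₂` together with all arcs `z₂u` and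
`uz₁` for `u ∈ V(D)`. -/
def Digraph'.IsKnobOf {V : Type*} [DecidableEq V] (D K : Digraph' V) (z₁ z₂ : V) : Prop :=
  z₁ ∉ D.verts ∧ z₂ ∉ D.verts ∧ z₁ ≠ z₂ ∧
  K.verts = insert z₁ (insert z₂ D.verts) ∧
  K.arcs = D.arcs ∪ {(z₁, z₂)} ∪ D.verts.image (fun u => (z₂, u)) ∪
    D.verts.image (fun u => (u, z₁))

/-!
Every directed cycle of `K(D)` through `z₁` or `z₂` passes through both, since the only
out-neighbour of `z₁` is `z₂` and the only in-neighbour of `z₂` is `z₁`. Hence a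
`k`-dicolouring of `D` extends to `K(D)` by giving `z₁` and `z₂` two different colours. If
a `k`-dicolouring of `K(D)` gave them the same colour, every `u ∈ V(D)` would avoid that colour
(otherwise `z₁ z₂ u` is a monochromatic triangle), and `D` would be `(k - 1)`-dicolourable.
-/

namespace Digraph'

variable {V : Type*} [DecidableEq V]

section Cycles

variable {c : List V} {v : V}

theorem mem_of_mem_cyclicArcs {a : V × V} (h : a ∈ cyclicArcs c) : a.1 ∈ c ∧ a.2 ∈ c := by
  have := List.of_mem_zip (List.mem_toFinset.mp h)
  exact ⟨this.1, List.mem_rotate.mp this.2⟩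

theorem exists_mem_cyclicArcs_fst (hv : v ∈ c) : ∃ w ∈ c, (v, w) ∈ cyclicArcs c := by
  have : v ∈ (c.zip (c.rotate 1)).map Prod.fst := by rwa [List.map_fst_zip (by simp)]
  obtain ⟨⟨_, w⟩, hmem, rfl⟩ := List.mem_map.mp this
  exact ⟨w, List.mem_rotate.mp (List.of_mem_zip hmem).2, List.mem_toFinset.mpr hmem⟩

theorem exists_mem_cyclicArcs_snd (hv : v ∈ c) : ∃ u ∈ c, (u, v) ∈ cyclicArcs c := by
  have : v ∈ (c.zip (c.rotate 1)).map Prod.snd := by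
    rwa [List.map_snd_zip (by simp), List.mem_rotate]
  obtain ⟨⟨u, _⟩, hmem, rfl⟩ := List.mem_map.mp this
  exact ⟨u, (List.of_mem_zip hmem).1, List.mem_toFinset.mpr hmem⟩

theorem cyclicArcs_triple (a b d : V) : cyclicArcs [a, b, d] = {(a, b), (b, d), (d, a)} := by
  ext; simp [cyclicArcs, List.rotate]

end Cycles

variable {D H : Digraph' V} {k : ℕ} {φ : V → Fin k}

theorem AcyclicOn.anti {S T : Finset V} (hD : D.AcyclicOn T) (hHD : H.arcs ⊆ D.arcs)
    (hST : S ⊆ T) : H.AcyclicOn S := by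
  rintro ⟨c, hnd, hlen, hS, hc⟩
  exact hD ⟨c, hnd, hlen, fun v hv => hST (hS v hv), hc.trans hHD⟩

theorem not_acyclicOn_of_triangle {S : Finset V} {a b d : V} (hab : a ≠ b) (had : a ≠ d)
    (hbd : b ≠ d) (hS : a ∈ S ∧ b ∈ S ∧ d ∈ S)
    (harcs : (a, b) ∈ D.arcs ∧ (b, d) ∈ D.arcs ∧ (d, a) ∈ D.arcs) : ¬ D.AcyclicOn S := by
  refine fun hD => hD ⟨[a, b, d], by simp [*], by simp, ?_, ?_⟩
  · simpa using hS
  · simpa [cyclicArcs_triple, Finset.insert_subset_iff] using harcs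

theorem IsDicolouring.of_isSubdigraph (hHD : H.IsSubdigraph D) (hφ : D.IsDicolouring k φ) :
    H.IsDicolouring k φ :=
  fun i => (hφ i).anti hHD.2 (Finset.filter_subset_filter _ hHD.1)

theorem Dicolourable.of_isSubdigraph (hHD : H.IsSubdigraph D) :
    D.Dicolourable k → H.Dicolourable k
  | ⟨φ, hφ⟩ => ⟨φ, hφ.of_isSubdigraph hHD⟩

theorem IsDicolouring.dicolourable_of_forall_ne {n : ℕ} [NeZero n] {φ : V → Fin (n + 1)}
    (hφ : D.IsDicolouring (n + 1) φ) (c : Fin (n + 1)) (hc : ∀ v ∈ D.verts, φ v ≠ c) :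
    D.Dicolourable n := by
  refine ⟨fun v => Function.invFun c.succAbove (φ v), fun i => ?_⟩
  refine (hφ (c.succAbove i)).anti subset_rfl fun v hv => ?_
  obtain ⟨hvD, hvi⟩ := Finset.mem_filter.mp hv
  refine Finset.mem_filter.mpr ⟨hvD, ?_⟩
  rw [← hvi, Function.invFun_eq (Fin.exists_succAbove_eq (hc v hvD))]

theorem dichromatic_le (h : D.Dicolourable k) : D.dichromatic ≤ k := Nat.sInf_le h

theorem dicolourable_dichromatic_of_pos (h : 0 < D.dichromatic) :
    D.Dicolourable D.dichromatic :=
  Nat.sInf_mem (Nat.nonempty_of_pos_sInf h)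

theorem dichromatic_mono (hHD : H.IsSubdigraph D) (hD : D.Dicolourable k) :
    H.dichromatic ≤ D.dichromatic :=
  dichromatic_le <| Dicolourable.of_isSubdigraph hHD <|
    Nat.sInf_mem (s := {j | D.Dicolourable j}) ⟨k, hD⟩

namespace IsKnobOf

variable {K : Digraph' V} {z₁ z₂ : V}

theorem mem_arcs_iff (hK : D.IsKnobOf K z₁ z₂) {a b : V} :
    (a, b) ∈ K.arcs ↔ (a, b) ∈ D.arcs ∨ (a = z₁ ∧ b = z₂) ∨ (a = z₂ ∧ b ∈ D.verts) ∨
      (a ∈ D.verts ∧ b = z₁) := by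
  rw [hK.2.2.2.2]
  simp only [Finset.mem_union, Finset.mem_singleton, Finset.mem_image, Prod.mk.injEq]
  grind

theorem isSubdigraph (hK : D.IsKnobOf K z₁ z₂) : D.IsSubdigraph K := by
  refine ⟨fun v hv => ?_, fun ⟨a, b⟩ h => hK.mem_arcs_iff.mpr (Or.inl h)⟩
  rw [hK.2.2.2.1]
  exact Finset.mem_insert_of_mem (Finset.mem_insert_of_mem hv)

variable {c : List V}

theorem mem_cycle_z₂ (hK : D.IsKnobOf K z₁ z₂) (hc : cyclicArcs c ⊆ K.arcs) (h₁ : z₁ ∈ c) :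
    z₂ ∈ c := by
  obtain ⟨w, hw, hzw⟩ := exists_mem_cyclicArcs_fst h₁
  rcases hK.mem_arcs_iff.mp (hc hzw) with h | h | h | h
  · exact absurd (D.wf _ h).1 hK.1
  · exact h.2 ▸ hw
  · exact absurd h.1 hK.2.2.1
  · exact absurd h.1 hK.1

theorem mem_cycle_z₁ (hK : D.IsKnobOf K z₁ z₂) (hc : cyclicArcs c ⊆ K.arcs) (h₂ : z₂ ∈ c) :
    z₁ ∈ c := by
  obtain ⟨u, hu, huz⟩ := exists_mem_cyclicArcs_snd h₂
  rcases hK.mem_arcs_iff.mp (hc huz) with h | h | h | h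
  · exact absurd (D.wf _ h).2.1 hK.2.1
  · exact h.1 ▸ hu
  · exact absurd h.2 hK.2.1
  · exact absurd h.2 (Ne.symm hK.2.2.1)

theorem cyclicArcs_subset_arcs (hK : D.IsKnobOf K z₁ z₂) (hc : cyclicArcs c ⊆ K.arcs)
    (h₁ : z₁ ∉ c) (h₂ : z₂ ∉ c) : cyclicArcs c ⊆ D.arcs := by
  rintro ⟨a, b⟩ hab
  obtain ⟨ha, hb⟩ := mem_of_mem_cyclicArcs hab
  rcases hK.mem_arcs_iff.mp (hc hab) with h | h | h | h
  · exact h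
  · exact absurd (h.1 ▸ ha) h₁
  · exact absurd (h.1 ▸ ha) h₂
  · exact absurd (h.2 ▸ hb) h₁

theorem mem_verts_of_ne (hK : D.IsKnobOf K z₁ z₂) {v : V} (hv : v ∈ K.verts) (h₁ : v ≠ z₁)
    (h₂ : v ≠ z₂) : v ∈ D.verts := by
  rw [hK.2.2.2.1] at hv
  simpa [h₁, h₂] using hv

theorem isDicolouring_update (hK : D.IsKnobOf K z₁ z₂) (hφ : D.IsDicolouring k φ)
    {a b : Fin k} (hab : a ≠ b) :
    K.IsDicolouring k (Function.update (Function.update φ z₁ a) z₂ b) := by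
  set ψ := Function.update (Function.update φ z₁ a) z₂ b
  have hψ₁ : ψ z₁ = a := by simp [ψ, hK.2.2.1]
  have hψ₂ : ψ z₂ = b := by simp [ψ]
  rintro i ⟨c, hnd, hlen, hS, hc⟩
  have hcol : ∀ v ∈ c, v ∈ K.verts ∧ ψ v = i := fun v hv => Finset.mem_filter.mp (hS v hv)
  by_cases h₁ : z₁ ∈ c
  · exact hab (hψ₁.symm.trans ((hcol _ h₁).2.trans
      ((hcol _ (hK.mem_cycle_z₂ hc h₁)).2.symm.trans hψ₂)))
  have h₂ : z₂ ∉ c := fun h₂ => h₁ (hK.mem_cycle_z₁ hc h₂)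
  refine hφ i ⟨c, hnd, hlen, fun v hv => ?_, hK.cyclicArcs_subset_arcs hc h₁ h₂⟩
  have hv₁ : v ≠ z₁ := fun h => h₁ (h ▸ hv)
  have hv₂ : v ≠ z₂ := fun h => h₂ (h ▸ hv)
  refine Finset.mem_filter.mpr ⟨hK.mem_verts_of_ne (hcol v hv).1 hv₁ hv₂, ?_⟩
  simpa [ψ, hv₁, hv₂] using (hcol v hv).2

theorem ne_of_isDicolouring_of_eq (hK : D.IsKnobOf K z₁ z₂) (hφ : K.IsDicolouring k φ)
    (h : φ z₁ = φ z₂) {u : V} (hu : u ∈ D.verts) : φ u ≠ φ z₁ := by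
  intro hu₁
  have hKv : ∀ v, v = z₁ ∨ v = z₂ ∨ v ∈ D.verts → v ∈ K.verts := by
    rintro v hv; rw [hK.2.2.2.1]; simpa using hv
  refine not_acyclicOn_of_triangle hK.2.2.1 (fun e => hK.1 (e ▸ hu))
    (fun e => hK.2.1 (e ▸ hu)) ⟨?_, ?_, ?_⟩ ⟨?_, ?_, ?_⟩ (hφ (φ z₁))
  · exact Finset.mem_filter.mpr ⟨hKv _ (.inl rfl), rfl⟩
  · exact Finset.mem_filter.mpr ⟨hKv _ (.inr (.inl rfl)), h.symm⟩
  · exact Finset.mem_filter.mpr ⟨hKv _ (.inr (.inr hu)), hu₁⟩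
  · exact hK.mem_arcs_iff.mpr (.inr (.inl ⟨rfl, rfl⟩))
  · exact hK.mem_arcs_iff.mpr (.inr (.inr (.inl ⟨rfl, hu⟩)))
  · exact hK.mem_arcs_iff.mpr (.inr (.inr (.inr ⟨hu, rfl⟩)))

end IsKnobOf

end Digraph'

open Digraph' in
theorem knob_dichromatic_general {V : Type*} [DecidableEq V] (k : ℕ) (hk : 2 ≤ k)
    (D K : Digraph' V) (z₁ z₂ : V)
    (hcrit : Digraph'.Dicritical k D)
    (hknob : D.IsKnobOf K z₁ z₂) :
    K.dichromatic = k ∧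
      ∀ φ : V → Fin k, K.IsDicolouring k φ → φ z₁ ≠ φ z₂ := by
  obtain ⟨n, rfl⟩ : ∃ n, k = n + 2 := ⟨k - 2, by omega⟩
  obtain ⟨hχ, -⟩ := hcrit
  obtain ⟨ψ, hψ⟩ : D.Dicolourable (n + 2) := hχ ▸ dicolourable_dichromatic_of_pos (by omega)
  have hK : K.Dicolourable (n + 2) :=
    ⟨_, hknob.isDicolouring_update hψ (show (0 : Fin (n + 2)) ≠ 1 by simp)⟩
  refine ⟨le_antisymm (dichromatic_le hK) (hχ ▸ dichromatic_mono hknob.isSubdigraph hK),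
    fun φ hφ h => ?_⟩
  have hD : D.Dicolourable (n + 1) :=
    (hφ.of_isSubdigraph hknob.isSubdigraph).dicolourable_of_forall_ne (φ z₁)
      fun _ hu => hknob.ne_of_isDicolouring_of_eq hφ h hu
  have := dichromatic_le hD
  omega

open Digraph' in
/-- If `k ≥ 2`, `D` is a `k`-dicritical oriented graph and
`K(D)` is the `D`-knob with base `z₁z₂`, then `χ⃗(K(D)) = k` and in every
`k`-dicolouring of `K(D)` the vertices `z₁` and `z₂` get different colours. -/
theorem knob_dichromatic {V : Type*} [DecidableEq V] (k : ℕ) (hk : 2 ≤ k)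
    (D K : Digraph' V) (z₁ z₂ : V)
    (hcrit : Digraph'.Dicritical k D) (horient : D.Oriented)
    (hknob : D.IsKnobOf K z₁ z₂) :
    K.dichromatic = k ∧
      ∀ φ : V → Fin k, K.IsDicolouring k φ → φ z₁ ≠ φ z₂ :=
  knob_dichromatic_general k hk D K z₁ z₂ hcrit hknob
end

section
/- Every tree T with n ≥ 2 vertices and f leaves has a matching of size at least (n − f + 1)/2. -/
/-!
A longest path in a forest starts at a leaf `a` whose neighbour `c` has at most one internal
neighbour. Deleting every edge at `a` and `c` thus destroys at most two internal vertices, while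
`ac` extends any matching of what remains. By induction over the forest, `#internal + 1 ≤ 2ν`
whenever there is an edge, and `n - f` is exactly the number of internal vertices.
-/

open Finset

namespace SimpleGraph

variable {V : Type*} {G : SimpleGraph V}

def internalVerts (G : SimpleGraph V) : Set V := {v | (G.neighborSet v).Nontrivial}

theorem IsAcyclic.neighborSet_subset_snd_of_longest_path (hG : G.IsAcyclic) {u v : V}
    {p : G.Walk u v} (hp : p.IsPath)
    (hmax : ∀ (u' v' : V) (q : G.Walk u' v'), q.IsPath → q.length ≤ p.length) :
    G.neighborSet u ⊆ {p.snd} := by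
  intro w huw
  by_cases hw : w ∈ p.support
  · exact hG.eq_snd_of_adj_start hp huw hw
  · simpa using hmax _ _ _ (hp.cons hw (h := huw.symm))

theorem IsAcyclic.exists_pendant_edge [Finite V] (hG : G.IsAcyclic) (hne : G ≠ ⊥) :
    ∃ a c, G.Adj a c ∧ (G.neighborSet a).Subsingleton ∧
      (G.neighborSet c ∩ G.internalVerts).Subsingleton := by
  obtain ⟨x, y, hxy⟩ := ne_bot_iff_exists_adj.mp hne
  have : Nonempty V := ⟨x⟩
  obtain ⟨a, b, p, hp, hmax⟩ := Walk.exists_isPath_forall_isPath_length_le_length G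
  have hnil : ¬p.Nil := fun hnil => by
    simpa [hnil.length_eq_zero] using hmax _ _ _ (Walk.IsPath.of_adj hxy)
  have hleaf := hG.neighborSet_subset_snd_of_longest_path hp hmax
  refine ⟨a, p.snd, p.adj_snd hnil, Set.subsingleton_of_subset_singleton hleaf,
    Set.subsingleton_of_subset_singleton (a := p.tail.snd) ?_⟩
  rintro y ⟨hcy, hy⟩
  by_cases hyq : y ∈ p.tail.support
  · exact hG.eq_snd_of_adj_start hp.tail hcy hyq
  · -- extending the tail by `y` gives another longest path, so `y` would be a leaf
    have hr := hp.tail.cons hyq (h := G.adj_symm hcy)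
    have hrmax : ∀ (u' v' : V) (q : G.Walk u' v'), q.IsPath →
        q.length ≤ (p.tail.cons (G.adj_symm hcy)).length := by
      rwa [Walk.length_cons, Walk.length_tail_add_one hnil]
    exact absurd (Set.subsingleton_of_subset_singleton
      (hG.neighborSet_subset_snd_of_longest_path hr hrmax)) hy.not_subsingleton

section PendantEdge

variable {a c : V}

theorem adj_deleteIncidenceSet_deleteIncidenceSet (hac : G.Adj a c)
    (ha : (G.neighborSet a).Subsingleton) {v w : V} (hv : v ∈ G.internalVerts)
    (hvc : v ≠ c) (hvw : G.Adj v w) (hwc : w ≠ c) :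
    ((G.deleteIncidenceSet a).deleteIncidenceSet c).Adj v w := by
  have hva : v ≠ a := by
    rintro rfl
    exact hv.not_subsingleton ha
  have hwa : w ≠ a := by
    rintro rfl
    exact hvc (ha (G.adj_symm hvw) hac)
  simp [deleteIncidenceSet_adj, *]

theorem internalVerts_subset_singleton (hac : G.Adj a c) (ha : (G.neighborSet a).Subsingleton)
    (hbot : (G.deleteIncidenceSet a).deleteIncidenceSet c = ⊥) :
    G.internalVerts ⊆ {c} := by
  intro v hv
  by_contra hvc
  obtain ⟨w, hvw, hwc⟩ := hv.exists_ne c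
  simpa [hbot] using adj_deleteIncidenceSet_deleteIncidenceSet hac ha hv hvc hvw hwc

theorem internalVerts_subset_insert (hac : G.Adj a c) (ha : (G.neighborSet a).Subsingleton) :
    G.internalVerts ⊆ insert c (((G.deleteIncidenceSet a).deleteIncidenceSet c).internalVerts ∪
      (G.neighborSet c ∩ G.internalVerts)) := by
  intro v hv
  by_cases hvc : v = c
  · exact .inl hvc
  by_cases hcv : G.Adj c v
  · exact .inr (.inr ⟨hcv, hv⟩)
  refine .inr (.inl (hv.mono fun w hvw => ?_))
  exact adj_deleteIncidenceSet_deleteIncidenceSet hac ha hv hvc hvw fun hwc =>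
    hcv (hwc ▸ G.adj_symm hvw)

theorem ncard_internalVerts_le [Finite V] (hac : G.Adj a c) (ha : (G.neighborSet a).Subsingleton)
    (hc : (G.neighborSet c ∩ G.internalVerts).Subsingleton) :
    G.internalVerts.ncard ≤
      ((G.deleteIncidenceSet a).deleteIncidenceSet c).internalVerts.ncard + 2 := by
  calc G.internalVerts.ncard
      ≤ (insert c (((G.deleteIncidenceSet a).deleteIncidenceSet c).internalVerts ∪
          (G.neighborSet c ∩ G.internalVerts))).ncard :=
        Set.ncard_le_ncard (internalVerts_subset_insert hac ha)
    _ ≤ ((G.deleteIncidenceSet a).deleteIncidenceSet c).internalVerts.ncard +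
          (G.neighborSet c ∩ G.internalVerts).ncard + 1 :=
        (Set.ncard_insert_le _ _).trans (by grw [Set.ncard_union_le])
    _ ≤ _ := by grw [Set.ncard_le_one_iff_subsingleton.mpr hc]

end PendantEdge

theorem Subgraph.IsMatching.exists_ncard_edgeSet_eq_add_one [Finite V] {G' : SimpleGraph V}
    (hle : G' ≤ G) {M' : G'.Subgraph} (hM' : M'.IsMatching) {a c : V} (hac : G.Adj a c)
    (ha : a ∉ G'.support) (hc : c ∉ G'.support) :
    ∃ M : G.Subgraph, M.IsMatching ∧ M.edgeSet.ncard = M'.edgeSet.ncard + 1 := by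
  have hverts : M'.verts ⊆ G'.support := fun v hv => by
    obtain ⟨w, hvw, -⟩ := hM' hv
    exact ⟨w, M'.adj_sub hvw⟩
  refine ⟨M'.map (Hom.ofLE hle) ⊔ G.subgraphOfAdj hac,
    (hM'.map_ofLE hle).sup (.subgraphOfAdj hac) ?_, ?_⟩
  · rw [(hM'.map_ofLE hle).support_eq_verts, (IsMatching.subgraphOfAdj hac).support_eq_verts]
    simp only [map_verts, Hom.coe_ofLE, Set.image_id, subgraphOfAdj_verts]
    rw [Set.disjoint_insert_right, Set.disjoint_singleton_right]
    exact ⟨fun h => ha (hverts h), fun h => hc (hverts h)⟩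
  · have hac' : s(a, c) ∉ M'.edgeSet := fun h => ha (hverts (M'.edge_vert h))
    rw [Subgraph.edgeSet_sup, edgeSet_subgraphOfAdj, Subgraph.edgeSet_map]
    simp only [Hom.coe_ofLE, Sym2.map_id, Set.image_id]
    rw [Set.ncard_union_eq (by simpa using hac'), Set.ncard_singleton]

theorem IsAcyclic.exists_isMatching_ncard_internalVerts_add_one_le [Finite V] (hG : G.IsAcyclic)
    (hne : G ≠ ⊥) :
    ∃ M : G.Subgraph, M.IsMatching ∧ G.internalVerts.ncard + 1 ≤ 2 * M.edgeSet.ncard := by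
  induction G using WellFoundedLT.induction with
  | ind G ih =>
  obtain ⟨a, c, hac, ha, hc⟩ := hG.exists_pendant_edge hne
  set G' := (G.deleteIncidenceSet a).deleteIncidenceSet c
  have hle : G' ≤ G := (deleteIncidenceSet_le _ _).trans (deleteIncidenceSet_le _ _)
  have hsa : a ∉ G'.support := fun h =>
    (support_deleteIncidenceSet_subset G a (support_mono (deleteIncidenceSet_le _ c) h)).2 rfl
  have hsc : c ∉ G'.support := fun h => (support_deleteIncidenceSet_subset _ _ h).2 rfl
  by_cases hbot : G' = ⊥
  · refine ⟨G.subgraphOfAdj hac, .subgraphOfAdj hac, ?_⟩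
    grw [Set.ncard_le_ncard (internalVerts_subset_singleton hac ha hbot)]
    simp
  · have hlt : G' < G := lt_of_le_of_ne hle fun h => hsa (h ▸ ⟨c, hac⟩)
    obtain ⟨M', hM', hbound⟩ := ih G' hlt (hG.anti hle) hbot
    obtain ⟨M, hM, hcard⟩ := hM'.exists_ncard_edgeSet_eq_add_one hle hac hsa hsc
    refine ⟨M, hM, ?_⟩
    have hI : G.internalVerts.ncard ≤ G'.internalVerts.ncard + 2 :=
      ncard_internalVerts_le hac ha hc
    omega

theorem mem_internalVerts_iff_one_lt_degree [Fintype V] [DecidableRel G.Adj] {v : V} :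
    v ∈ G.internalVerts ↔ 1 < G.degree v := by
  rw [← card_neighborFinset_eq_degree, Finset.one_lt_card_iff_nontrivial, Finset.Nontrivial,
    coe_neighborFinset]
  rfl

theorem card_filter_degree_le_one_add_ncard_internalVerts [Fintype V] (G : SimpleGraph V)
    [DecidableRel G.Adj] :
    #{v | G.degree v ≤ 1} + G.internalVerts.ncard = Fintype.card V := by
  have : G.internalVerts = ↑({v | ¬G.degree v ≤ 1} : Finset V) := by
    ext v
    simp [mem_internalVerts_iff_one_lt_degree]
  rw [this, Set.ncard_coe_finset, Finset.card_filter_add_card_filter_not, Finset.card_univ]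

end SimpleGraph

open SimpleGraph

theorem tree_matching_lower_bound_general {V : Type*} [Fintype V]
    (G : SimpleGraph V) [DecidableRel G.Adj] (hT : G.IsTree)
    (hn : 2 ≤ Fintype.card V) :
    ∃ M : G.Subgraph, M.IsMatching ∧
      ((Fintype.card V : ℚ)
          - ((Finset.univ.filter fun v => G.degree v ≤ 1).card : ℚ) + 1) / 2
        ≤ (M.edgeSet.ncard : ℚ) := by
  have := Fintype.one_lt_card_iff_nontrivial.mp hn
  have hne : G ≠ ⊥ := fun hbot => not_connected_bot (hbot ▸ hT.connected)
  obtain ⟨M, hM, hbound⟩ := hT.isAcyclic.exists_isMatching_ncard_internalVerts_add_one_le hne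
  refine ⟨M, hM, ?_⟩
  have hcount : (Fintype.card V : ℚ) = #{v | G.degree v ≤ 1} + G.internalVerts.ncard :=
    mod_cast (card_filter_degree_le_one_add_ncard_internalVerts G).symm
  rw [div_le_iff₀ two_pos]
  qify at hbound
  linarith

/-- Every tree `T` with `n ≥ 2` vertices and `f` leaves (a
leaf is a vertex of degree at most 1) has a matching of size at least
`(n - f + 1)/2`. -/
theorem tree_matching_lower_bound {V : Type*} [Fintype V] [DecidableEq V]
    (G : SimpleGraph V) [DecidableRel G.Adj] (hT : G.IsTree)
    (hn : 2 ≤ Fintype.card V) :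
    ∃ M : G.Subgraph, M.IsMatching ∧
      ((Fintype.card V : ℚ)
          - ((Finset.univ.filter fun v => G.degree v ≤ 1).card : ℚ) + 1) / 2
        ≤ (M.edgeSet.ncard : ℚ) :=
  tree_matching_lower_bound_general G hT hn
end

section
/- Let D be an odd 3-wheel with center c. Then (i) for every arc e of D, the digraph D with e removed contains, as a subdigraph, a bidirected odd cycle with one arc removed; and (ii) for every vertex v of D other than c, the digraph D − v contains, as a subdigraph, a bidirected odd cycle with one arc removed. -/
/-!
Let `p₁, p₂, p₃` be the three spokes of the wheel, from the center `c` to `x, y, z`. Two spokes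
`pᵢ, pⱼ` together with the rim arc joining their ends form a bidirected cycle of odd length
(odd + odd + 1) with one arc of the closing digon missing. The vertex sets of these three
subdigraphs have only `c` in common, so every vertex other than `c`, and every arc (whose two ends
cannot both be `c`), is avoided by one of them.
-/


namespace Digraph'

variable {V : Type*}

namespace IsOddBidirPathList

variable {p : List V} {w a : V}

lemma two_le_length (hp : IsOddBidirPathList p w a) : 2 ≤ p.length := by
  obtain ⟨-, ⟨k, hk⟩, hw, -⟩ := hp
  have : p ≠ [] := by rintro rfl; simp at hw
  have := List.length_pos_of_ne_nil this
  omega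

lemma end_mem (hp : IsOddBidirPathList p w a) : a ∈ p := List.mem_of_mem_getLast? hp.2.2.2

lemma end_ne_start (hp : IsOddBidirPathList p w a) : a ≠ w := by
  have hlen := hp.two_le_length
  obtain ⟨hnodup, -, hw, ha⟩ := hp
  obtain ⟨_ | ⟨y, t⟩, rfl⟩ := List.head?_eq_some_iff.1 hw
  · simp at hlen
  · rw [List.getLast?_cons_cons] at ha
    exact fun h => (List.nodup_cons.1 hnodup).1 (h ▸ List.mem_of_mem_getLast? ha)

end IsOddBidirPathList

variable [DecidableEq V]

lemma mem_symArcs {s : Finset (V × V)} {e : V × V} : e ∈ symArcs s ↔ e ∈ s ∨ e.swap ∈ s := by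
  simp [symArcs, Prod.swap_eq_iff_eq_swap]

lemma symArcs_image_swap (s : Finset (V × V)) : symArcs (s.image Prod.swap) = symArcs s := by
  ext e; simp [mem_symArcs, Prod.swap_eq_iff_eq_swap]; tauto

@[simp] lemma pathArcs_singleton (x : V) : pathArcs [x] = ∅ := rfl

@[simp] lemma pathArcs_cons_cons (x y : V) (l : List V) :
    pathArcs (x :: y :: l) = insert (x, y) (pathArcs (y :: l)) := by
  simp [pathArcs]

lemma mem_of_mem_pathArcs {l : List V} {u v : V} (h : (u, v) ∈ pathArcs l) : u ∈ l ∧ v ∈ l := by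
  obtain ⟨hu, hv⟩ := List.of_mem_zip (List.mem_toFinset.1 h)
  exact ⟨hu, List.mem_of_mem_tail hv⟩

lemma ne_of_mem_pathArcs : ∀ {l : List V}, l.Nodup → ∀ {u v : V}, (u, v) ∈ pathArcs l → u ≠ v
  | [], _, _, _, h => by simp [pathArcs] at h
  | [_], _, _, _, h => by simp at h
  | x :: y :: l, hl, u, v, h => by
    rw [pathArcs_cons_cons, Finset.mem_insert, Prod.mk.injEq] at h
    rcases h with ⟨rfl, rfl⟩ | h
    · exact fun hxy => (List.nodup_cons.1 hl).1 (hxy ▸ List.mem_cons_self ..)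
    · exact ne_of_mem_pathArcs (List.nodup_cons.1 hl).2 h

lemma pathArcs_append : ∀ {p r : List V} {a b : V}, p.getLast? = some a → r.head? = some b →
    pathArcs (p ++ r) = pathArcs p ∪ insert (a, b) (pathArcs r)
  | [], _, _, _, ha, _ => by simp at ha
  | [x], b' :: r, a, b, ha, hb => by simp_all
  | x :: y :: p, r, a, b, ha, hb => by
    rw [List.getLast?_cons_cons] at ha
    rw [List.cons_append, List.cons_append, pathArcs_cons_cons, ← List.cons_append,
      pathArcs_append ha hb, pathArcs_cons_cons, Finset.insert_union]

lemma pathArcs_reverse : ∀ l : List V, pathArcs l.reverse = (pathArcs l).image Prod.swap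
  | [] => rfl
  | [_] => rfl
  | x :: y :: l => by
    rw [List.reverse_cons, pathArcs_append (a := y) (by simp) rfl, pathArcs_reverse (y :: l)]
    simp

lemma cyclicArcs_eq_pathArcs (l : List V) : cyclicArcs l = pathArcs (l ++ l.take 1) := by
  cases l with
  | nil => rfl
  | cons x l =>
    have h := List.zip_append (l₁ := x :: l) (l₂ := l ++ [x]) (r₁ := [x]) (r₂ := []) (by simp)
    simp only [List.append_nil, List.zip_nil_right] at h
    simp only [cyclicArcs, pathArcs, List.rotate_cons_succ, List.rotate_zero, List.take_one,
      List.head?_cons, Option.toList_some]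
    rw [List.cons_append, List.tail_cons, ← List.cons_append, h]

lemma pathDigonArcs_reverse (l : List V) : pathDigonArcs l.reverse = pathDigonArcs l := by
  rw [pathDigonArcs, pathArcs_reverse, symArcs_image_swap, pathDigonArcs]

lemma pathDigonArcs_append {p r : List V} {a b : V} (ha : p.getLast? = some a)
    (hb : r.head? = some b) :
    pathDigonArcs (p ++ r) = pathDigonArcs p ∪ pathDigonArcs r ∪ {(a, b), (b, a)} := by
  ext e
  simp only [pathDigonArcs, pathArcs_append ha hb, mem_symArcs, Finset.mem_union,
    Finset.mem_insert, Finset.mem_singleton, Prod.swap_eq_iff_eq_swap, Prod.swap_prod_mk]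
  tauto

lemma mem_of_mem_pathDigonArcs {l : List V} {u v : V} (h : (u, v) ∈ pathDigonArcs l) :
    u ∈ l ∧ v ∈ l := by
  rcases mem_symArcs.1 h with h | h
  · exact mem_of_mem_pathArcs h
  · exact (mem_of_mem_pathArcs h).symm

lemma ne_of_mem_pathDigonArcs {l : List V} (hl : l.Nodup) {u v : V}
    (h : (u, v) ∈ pathDigonArcs l) : u ≠ v := by
  rcases mem_symArcs.1 h with h | h
  · exact ne_of_mem_pathArcs hl h
  · exact (ne_of_mem_pathArcs hl h).symm

lemma exists_isBidirectedOddCycle_of_oddPaths {p q : List V} {w a b : V}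
    (hp : IsOddBidirPathList p w a) (hq : IsOddBidirPathList q w b)
    (hpq : p.toFinset ∩ q.toFinset = {w}) :
    ∃ C : Digraph' V, C.IsBidirectedOddCycle ∧ C.verts = p.toFinset ∪ q.toFinset ∧
      C.arcs = pathDigonArcs p ∪ pathDigonArcs q ∪ {(a, b), (b, a)} := by
  have hcommon : ∀ v ∈ p, v ∈ q → v = w := fun v hvp hvq => Finset.mem_singleton.1
    (hpq ▸ Finset.mem_inter.2 ⟨List.mem_toFinset.2 hvp, List.mem_toFinset.2 hvq⟩)
  have hab : a ≠ b := fun h => hp.end_ne_start (hcommon a hp.end_mem (h ▸ hq.end_mem))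
  have hplen := hp.two_le_length
  have hqlen := hq.two_le_length
  obtain ⟨hpnodup, ⟨k, hk⟩, hpw, hpa⟩ := hp
  obtain ⟨hqnodup, ⟨l, hl⟩, hqw, hqb⟩ := hq
  obtain ⟨p', rfl⟩ := List.head?_eq_some_iff.1 hpw
  obtain ⟨q', rfl⟩ := List.head?_eq_some_iff.1 hqw
  -- the cycle runs along `p` from `w` to `a`, then back along `q` from `b`
  set L := w :: (p' ++ q'.reverse)
  have hnodup : L.Nodup := by
    show (w :: p' ++ q'.reverse).Nodup
    refine List.nodup_append.2 ⟨hpnodup, List.nodup_reverse.2 (List.nodup_cons.1 hqnodup).2, ?_⟩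
    rintro v hvp _ hvq rfl
    have hvq := List.mem_reverse.1 hvq
    exact (List.nodup_cons.1 hqnodup).1 (hcommon v hvp (List.mem_cons_of_mem w hvq) ▸ hvq)
  have hverts : L.toFinset = (w :: p').toFinset ∪ (w :: q').toFinset := by
    ext v; simp only [L, List.mem_toFinset, List.mem_cons, List.mem_append, List.mem_reverse,
      Finset.mem_union]; tauto
  have harcs : symArcs (cyclicArcs L) =
      pathDigonArcs (w :: p') ∪ pathDigonArcs (w :: q') ∪ {(a, b), (b, a)} := by
    have hclose : L ++ L.take 1 = w :: p' ++ (w :: q').reverse := by simp [L]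
    rw [cyclicArcs_eq_pathArcs, hclose, ← pathDigonArcs,
      pathDigonArcs_append hpa (by rw [List.head?_reverse]; exact hqb), pathDigonArcs_reverse]
  have hwf : ∀ e ∈ symArcs (cyclicArcs L), e.1 ∈ L.toFinset ∧ e.2 ∈ L.toFinset ∧ e.1 ≠ e.2 := by
    rintro ⟨u, v⟩ he
    simp only [harcs, hverts, Finset.mem_union, Finset.mem_insert, Finset.mem_singleton,
      List.mem_toFinset, Prod.mk.injEq] at he ⊢
    rcases he with (he | he) | ⟨rfl, rfl⟩ | ⟨rfl, rfl⟩
    · exact ⟨.inl (mem_of_mem_pathDigonArcs he).1, .inl (mem_of_mem_pathDigonArcs he).2,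
        ne_of_mem_pathDigonArcs hpnodup he⟩
    · exact ⟨.inr (mem_of_mem_pathDigonArcs he).1, .inr (mem_of_mem_pathDigonArcs he).2,
        ne_of_mem_pathDigonArcs hqnodup he⟩
    · exact ⟨.inl (List.mem_of_mem_getLast? hpa), .inr (List.mem_of_mem_getLast? hqb), hab⟩
    · exact ⟨.inr (List.mem_of_mem_getLast? hqb), .inl (List.mem_of_mem_getLast? hpa), hab.symm⟩
  have hlen : L.length + 1 = (w :: p').length + (w :: q').length := by simp [L]; omega
  refine ⟨⟨L.toFinset, symArcs (cyclicArcs L), hwf⟩, ⟨L, hnodup, by omega, ⟨k + l - 1, by omega⟩,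
    rfl, rfl⟩, hverts, harcs⟩

lemma exists_isSubdigraph_isBidirOddCycleMinusArc {D : Digraph' V} {p q : List V} {w a b : V}
    (hp : IsOddBidirPathList p w a) (hq : IsOddBidirPathList q w b)
    (hpq : p.toFinset ∩ q.toFinset = {w}) (hV : p.toFinset ∪ q.toFinset ⊆ D.verts)
    (hA : pathDigonArcs p ∪ pathDigonArcs q ∪ {(a, b)} ⊆ D.arcs) :
    ∃ H : Digraph' V, H.IsSubdigraph D ∧ H.IsBidirOddCycleMinusArc ∧
      H.verts = p.toFinset ∪ q.toFinset := by
  obtain ⟨C, hC, hCV, hCA⟩ := exists_isBidirectedOddCycle_of_oddPaths hp hq hpq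
  refine ⟨C.eraseArc (b, a), ⟨hCV ▸ hV, fun e he => hA ?_⟩,
    ⟨C, (b, a), hC, by simp [hCA], rfl, rfl⟩, hCV⟩
  simp only [eraseArc, hCA, Finset.mem_erase, Finset.mem_union, Finset.mem_insert,
    Finset.mem_singleton] at he ⊢
  tauto

lemma IsSubdigraph.eraseArc {H D : Digraph' V} {e : V × V} (h : H.IsSubdigraph D)
    (he : e ∉ H.arcs) : H.IsSubdigraph (D.eraseArc e) :=
  ⟨h.1, fun _ hf => Finset.mem_erase.2 ⟨fun hfe => he (hfe ▸ hf), h.2 hf⟩⟩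

lemma IsSubdigraph.delVert {H D : Digraph' V} {v : V} (h : H.IsSubdigraph D)
    (hv : v ∉ H.verts) : H.IsSubdigraph (D.delVert v) := by
  refine ⟨fun u hu => Finset.mem_erase.2 ⟨fun huv => hv (huv ▸ hu), h.1 hu⟩, fun _ hf => ?_⟩
  obtain ⟨h1, h2, -⟩ := H.wf _ hf
  exact Finset.mem_filter.2 ⟨h.2 hf, fun h1v => hv (h1v ▸ h1), fun h2v => hv (h2v ▸ h2)⟩

section CommonVertex

variable {D : Digraph' V} {P : Digraph' V → Prop} {c : V}
  (hc : ∀ v, (∀ H : Digraph' V, H.IsSubdigraph D → P H → v ∈ H.verts) → v = c)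
include hc

lemma exists_isSubdigraph_eraseArc {e : V × V} (he : e ∈ D.arcs) :
    ∃ H : Digraph' V, H.IsSubdigraph (D.eraseArc e) ∧ P H := by
  by_contra! h
  have hmem : ∀ H : Digraph' V, H.IsSubdigraph D → P H → e ∈ H.arcs :=
    fun H hH hP => by_contra fun heH => h H (hH.eraseArc heH) hP
  exact (D.wf e he).2.2 <| (hc _ fun H hH hP => (H.wf e (hmem H hH hP)).1).trans
    (hc _ fun H hH hP => (H.wf e (hmem H hH hP)).2.1).symm

lemma exists_isSubdigraph_delVert {v : V} (hvc : v ≠ c) :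
    ∃ H : Digraph' V, H.IsSubdigraph (D.delVert v) ∧ P H := by
  by_contra! h
  exact hvc (hc v fun H hH hP => by_contra fun hv => h H (hH.delVert hv) hP)

end CommonVertex

lemma IsOdd3WheelWithCenter.eq_of_forall_mem_verts {D : Digraph' V} {c v : V}
    (hD : D.IsOdd3WheelWithCenter c)
    (hv : ∀ H : Digraph' V, H.IsSubdigraph D → H.IsBidirOddCycleMinusArc → v ∈ H.verts) :
    v = c := by
  obtain ⟨p₁, p₂, p₃, x, y, z, hp₁, hp₂, hp₃, h₁₂, h₁₃, h₂₃, hV, hA⟩ := hD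
  obtain ⟨H₁₂, hsub₁₂, hH₁₂, hV₁₂⟩ := exists_isSubdigraph_isBidirOddCycleMinusArc hp₁ hp₂ h₁₂
    (by rw [hV]; grind) (by rw [hA]; grind)
  obtain ⟨H₂₃, hsub₂₃, hH₂₃, hV₂₃⟩ := exists_isSubdigraph_isBidirOddCycleMinusArc hp₂ hp₃ h₂₃
    (by rw [hV]; grind) (by rw [hA]; grind)
  obtain ⟨H₃₁, hsub₃₁, hH₃₁, hV₃₁⟩ := exists_isSubdigraph_isBidirOddCycleMinusArc hp₃ hp₁
    (by rw [Finset.inter_comm, h₁₃])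
    (by rw [hV]; grind) (by rw [hA]; grind)
  have h₁ := hV₁₂ ▸ hv H₁₂ hsub₁₂ hH₁₂
  have h₂ := hV₂₃ ▸ hv H₂₃ hsub₂₃ hH₂₃
  have h₃ := hV₃₁ ▸ hv H₃₁ hsub₃₁ hH₃₁
  simp only [Finset.mem_union] at h₁ h₂ h₃
  have hmeet : ∀ {s t : Finset V}, s ∩ t = {c} → v ∈ s → v ∈ t → v = c :=
    fun hst hs ht => Finset.mem_singleton.1 (hst ▸ Finset.mem_inter.2 ⟨hs, ht⟩)
  by_cases hv₁ : v ∈ p₁.toFinset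
  · exact h₂.elim (hmeet h₁₂ hv₁) (hmeet h₁₃ hv₁)
  · exact hmeet h₂₃ (h₁.resolve_left hv₁) (h₃.resolve_right hv₁)

end Digraph'

open Digraph' in
/-- Let `D` be an odd 3-wheel with center `c`. Then (i) for
every arc `e` of `D`, the digraph `D` minus `e` contains, as a subdigraph, a
bidirected odd cycle with one arc removed; and (ii) for every vertex `v ≠ c`,
the digraph `D - v` contains, as a subdigraph, a bidirected odd cycle with one
arc removed. -/
theorem odd3Wheel_contains_cycle_minus_arc {V : Type*} [DecidableEq V]
    (D : Digraph' V) (c : V) (hwheel : D.IsOdd3WheelWithCenter c) :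
    (∀ e ∈ D.arcs, ∃ H : Digraph' V,
      H.IsSubdigraph (D.eraseArc e) ∧ H.IsBidirOddCycleMinusArc) ∧
    (∀ v ∈ D.verts, v ≠ c → ∃ H : Digraph' V,
      H.IsSubdigraph (D.delVert v) ∧ H.IsBidirOddCycleMinusArc) := by
  have hc := fun v => hwheel.eq_of_forall_mem_verts (v := v)
  exact ⟨fun e he => exists_isSubdigraph_eraseArc hc he,
    fun v _ hvc => exists_isSubdigraph_delVert hc hvc⟩
end
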